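/- If there exists an independent set S of G (without isolated vertices) with |S| > |N(S)|, then |core(G)| > d_c(G). -/
import Mathlib


open Finset

open scoped Classical

variable {V : Type*}

/-- The neighborhood `N(X)` of a set of vertices `X`. -/
noncomputable def nbhd [Fintype V] (G : SimpleGraph V) (X : Finset V) : Finset V :=
  Finset.univ.filter (fun v => ∃ x ∈ X, G.Adj v x)

/-- The difference `d(X) = |X| - |N(X)|`. -/
noncomputable def diffd [Fintype V] (G : SimpleGraph V) (X : Finset V) : ℤ :=
  (X.card : ℤ) - ((nbhd G X).card : ℤ)

/-- The critical difference `d_c(G) = max{d(X) : X ⊆ V}`. -/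
noncomputable def critDiff [Fintype V] (G : SimpleGraph V) : ℤ :=
  Finset.univ.powerset.sup' ⟨∅, Finset.empty_mem_powerset _⟩ (diffd G)

/-- A set of vertices is independent if no two of its vertices are adjacent. -/
def IsIndep [Fintype V] (G : SimpleGraph V) (A : Finset V) : Prop :=
  ∀ a ∈ A, ∀ b ∈ A, ¬ G.Adj a b

/-- A critical independent set: independent with `d(A) = d_c(G)`. -/
def IsCritIndep [Fintype V] (G : SimpleGraph V) (A : Finset V) : Prop :=
  IsIndep G A ∧ diffd G A = critDiff G

/-- The independence number `α(G)`. -/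
noncomputable def indepNum [Fintype V] (G : SimpleGraph V) : ℕ :=
  (Finset.univ.powerset.filter (fun A => IsIndep G A)).sup Finset.card

/-- The independence number of the induced subgraph `G[X]`,
realized as the largest independent set contained in `X`. -/
noncomputable def indepNumOn [Fintype V] (G : SimpleGraph V) (X : Finset V) : ℕ :=
  (X.powerset.filter (fun A => IsIndep G A)).sup Finset.card

/-- A matching: a set of edges of `G`, pairwise vertex-disjoint. -/
def IsMatchingSet [Fintype V] (G : SimpleGraph V) (M : Finset (Sym2 V)) : Prop :=
  (∀ e ∈ M, e ∈ G.edgeSet) ∧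
  (∀ e ∈ M, ∀ f ∈ M, e ≠ f → ∀ v : V, v ∈ e → v ∉ f)

/-- The matching number `μ(G)`. -/
noncomputable def matchNum [Fintype V] (G : SimpleGraph V) : ℕ :=
  ((Finset.univ : Finset (Sym2 V)).powerset.filter (fun M => IsMatchingSet G M)).sup Finset.card

/-- The matching number of the induced subgraph `G[X]`, realized as the
largest matching of `G` all of whose edges have both endpoints in `X`. -/
noncomputable def matchNumOn [Fintype V] (G : SimpleGraph V) (X : Finset V) : ℕ :=
  ((Finset.univ : Finset (Sym2 V)).powerset.filter
    (fun M => IsMatchingSet G M ∧ ∀ e ∈ M, ∀ v ∈ e, v ∈ X)).sup Finset.card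

/-- `ker(G)`: the intersection of all critical independent sets. -/
noncomputable def kerG [Fintype V] (G : SimpleGraph V) : Finset V :=
  Finset.univ.filter (fun v => ∀ A : Finset V, IsCritIndep G A → v ∈ A)

/-- A maximum independent set, i.e. a member of `Ω(G)`. -/
def IsMaxIndep [Fintype V] (G : SimpleGraph V) (S : Finset V) : Prop :=
  IsIndep G S ∧ S.card = indepNum G

/-- `core(G)`: the intersection of all maximum independent sets. -/
noncomputable def coreG [Fintype V] (G : SimpleGraph V) : Finset V :=
  Finset.univ.filter (fun v => ∀ S : Finset V, IsMaxIndep G S → v ∈ S)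

/-- `corona(G)`: the union of all maximum independent sets. -/
noncomputable def coronaG [Fintype V] (G : SimpleGraph V) : Finset V :=
  Finset.univ.filter (fun v => ∃ S : Finset V, IsMaxIndep G S ∧ v ∈ S)

/-- `G` has no isolated vertices. -/
def NoIsolated (G : SimpleGraph V) : Prop := ∀ v : V, ∃ w, G.Adj v w

section Aux

variable [Fintype V] {G : SimpleGraph V}

lemma mem_nbhd' {X : Finset V} {v : V} : v ∈ nbhd G X ↔ ∃ x ∈ X, G.Adj v x := by
  simp [nbhd]

lemma nbhd_mono' {X Y : Finset V} (h : X ⊆ Y) : nbhd G X ⊆ nbhd G Y := by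
  intro v hv
  rw [mem_nbhd'] at hv ⊢
  obtain ⟨x, hx, hadj⟩ := hv
  exact ⟨x, h hx, hadj⟩

lemma nbhd_union' (X Y : Finset V) : nbhd G (X ∪ Y) = nbhd G X ∪ nbhd G Y := by
  ext v
  simp only [mem_nbhd', Finset.mem_union]
  constructor
  · rintro ⟨x, hx | hx, hadj⟩
    · exact Or.inl ⟨x, hx, hadj⟩
    · exact Or.inr ⟨x, hx, hadj⟩
  · rintro (⟨x, hx, hadj⟩ | ⟨x, hx, hadj⟩)
    · exact ⟨x, Or.inl hx, hadj⟩
    · exact ⟨x, Or.inr hx, hadj⟩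

lemma diffd_le_critDiff (X : Finset V) : diffd G X ≤ critDiff G :=
  Finset.le_sup' (diffd G) (Finset.mem_powerset.mpr (Finset.subset_univ X))

lemma supermod (X Y : Finset V) :
    diffd G X + diffd G Y ≤ diffd G (X ∪ Y) + diffd G (X ∩ Y) := by
  have h1 : (X ∪ Y).card + (X ∩ Y).card = X.card + Y.card :=
    Finset.card_union_add_card_inter X Y
  have h2 : (nbhd G (X ∪ Y)).card + (nbhd G (X ∩ Y)).card
      ≤ (nbhd G X).card + (nbhd G Y).card := by
    rw [nbhd_union']
    have h3 : (nbhd G X ∪ nbhd G Y).card + (nbhd G X ∩ nbhd G Y).card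
        = (nbhd G X).card + (nbhd G Y).card :=
      Finset.card_union_add_card_inter _ _
    have h4 : (nbhd G (X ∩ Y)).card ≤ (nbhd G X ∩ nbhd G Y).card := by
      apply Finset.card_le_card
      intro v hv
      exact Finset.mem_inter.mpr
        ⟨nbhd_mono' (Finset.inter_subset_left) hv,
         nbhd_mono' (Finset.inter_subset_right) hv⟩
    omega
  unfold diffd
  omega

/-- From any set `X`, the set `X \ N(X)` is independent with at least the same difference. -/
lemma sdiff_nbhd_indep (X : Finset V) : IsIndep G (X \ nbhd G X) := by
  intro a ha b hb hadj
  rw [Finset.mem_sdiff] at ha hb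
  exact ha.2 (mem_nbhd'.mpr ⟨b, hb.1, hadj⟩)

lemma diffd_sdiff_nbhd (X : Finset V) : diffd G X ≤ diffd G (X \ nbhd G X) := by
  set N := nbhd G X with hN
  have hcard : (X \ N).card + (X ∩ N).card = X.card :=
    Finset.card_sdiff_add_card_inter X N
  have hsub : nbhd G (X \ N) ⊆ N \ (X ∩ N) := by
    intro w hw
    rw [mem_nbhd'] at hw
    obtain ⟨x', hx', hadj⟩ := hw
    rw [Finset.mem_sdiff] at hx'
    rw [Finset.mem_sdiff]
    constructor
    · exact mem_nbhd'.mpr ⟨x', hx'.1, hadj⟩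
    · intro hwXN
      rw [Finset.mem_inter] at hwXN
      exact hx'.2 (mem_nbhd'.mpr ⟨w, hwXN.1, hadj.symm⟩)
  have hNcard : (nbhd G (X \ N)).card + (X ∩ N).card ≤ N.card := by
    have h1 : (nbhd G (X \ N)).card ≤ (N \ (X ∩ N)).card := Finset.card_le_card hsub
    have h2 : (N \ (X ∩ N)).card + (N ∩ (X ∩ N)).card = N.card :=
      Finset.card_sdiff_add_card_inter N (X ∩ N)
    have h3 : N ∩ (X ∩ N) = X ∩ N :=
      Finset.inter_eq_right.mpr (Finset.inter_subset_right)
    rw [h3] at h2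
    omega
  unfold diffd
  rw [← hN]
  omega

/-- There exists a critical independent set. -/
lemma exists_critIndep (G : SimpleGraph V) : ∃ A : Finset V, IsCritIndep G A := by
  obtain ⟨X, _, hX⟩ := Finset.exists_mem_eq_sup' (⟨∅, Finset.empty_mem_powerset _⟩ :
    (Finset.univ.powerset (α := V)).Nonempty) (diffd G)
  refine ⟨X \ nbhd G X, sdiff_nbhd_indep X, le_antisymm (diffd_le_critDiff _) ?_⟩
  calc critDiff G = diffd G X := hX
    _ ≤ diffd G (X \ nbhd G X) := diffd_sdiff_nbhd X

lemma indep_card_le_indepNum {A : Finset V} (hA : IsIndep G A) : A.card ≤ indepNum G := by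
  apply Finset.le_sup
  rw [Finset.mem_filter]
  exact ⟨Finset.mem_powerset.mpr (Finset.subset_univ A), hA⟩

lemma exists_maxIndep (G : SimpleGraph V) : ∃ S : Finset V, IsMaxIndep G S := by
  have hne : ((Finset.univ.powerset (α := V)).filter (fun A => IsIndep G A)).Nonempty := by
    refine ⟨∅, ?_⟩
    rw [Finset.mem_filter]
    exact ⟨Finset.empty_mem_powerset _, fun a ha => absurd ha (Finset.notMem_empty a)⟩
  obtain ⟨S, hS, hcard⟩ := Finset.exists_mem_eq_sup _ hne Finset.card
  rw [Finset.mem_filter] at hS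
  exact ⟨S, hS.2, hcard.symm⟩

/-- Key lemma: the intersection of a critical independent set with a maximum
independent set is again a critical independent set. -/
lemma critIndep_inter_maxIndep {A S : Finset V} (hA : IsCritIndep G A)
    (hS : IsMaxIndep G S) : IsCritIndep G (A ∩ S) := by
  obtain ⟨hAind, hAcrit⟩ := hA
  obtain ⟨hSind, hScard⟩ := hS
  set N := nbhd G A with hN
  -- A is disjoint from its neighborhood
  have hAN : ∀ a ∈ A, a ∉ N := by
    intro a ha haN
    rw [hN, mem_nbhd'] at haN
    obtain ⟨x, hx, hadj⟩ := haN
    exact hAind a ha x hx hadj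
  -- S' = A ∪ (S \ N) is independent
  set S' := A ∪ (S \ N) with hS'
  have hS'ind : IsIndep G S' := by
    intro a ha b hb hadj
    rw [hS', Finset.mem_union, Finset.mem_sdiff] at ha hb
    rcases ha with ha | ⟨haS, haN'⟩
    · rcases hb with hb | ⟨hbS, hbN'⟩
      · exact hAind a ha b hb hadj
      · exact hbN' (mem_nbhd'.mpr ⟨a, ha, hadj.symm⟩)
    · rcases hb with hb | ⟨hbS, hbN'⟩
      · exact haN' (mem_nbhd'.mpr ⟨b, hb, hadj⟩)
      · exact hSind a haS b hbS hadj
  have hS'le : S'.card ≤ S.card := hScard ▸ indep_card_le_indepNum hS'ind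
  -- cardinality bookkeeping
  have e1 : S'.card + (A ∩ (S \ N)).card = A.card + (S \ N).card :=
    Finset.card_union_add_card_inter A (S \ N)
  have e2 : (S \ N).card + (S ∩ N).card = S.card := Finset.card_sdiff_add_card_inter S N
  have e3 : A ∩ (S \ N) = A ∩ S := by
    ext v
    simp only [Finset.mem_inter, Finset.mem_sdiff]
    exact ⟨fun h => ⟨h.1, h.2.1⟩, fun h => ⟨h.1, h.2, hAN v h.1⟩⟩
  -- (★) : A.card ≤ (S ∩ N).card + (A ∩ S).card
  have hstar : A.card ≤ (S ∩ N).card + (A ∩ S).card := by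
    rw [e3] at e1; omega
  -- S ∩ N ⊆ N \ nbhd G S
  have hSN : S ∩ N ⊆ N \ nbhd G S := by
    intro v hv
    rw [Finset.mem_inter] at hv
    rw [Finset.mem_sdiff]
    refine ⟨hv.2, fun hvN => ?_⟩
    rw [mem_nbhd'] at hvN
    obtain ⟨s, hs, hadj⟩ := hvN
    exact hSind v hv.1 s hs hadj
  have hSNle : (S ∩ N).card + (N ∩ nbhd G S).card ≤ N.card := by
    have h1 : (S ∩ N).card ≤ (N \ nbhd G S).card := Finset.card_le_card hSN
    have h2 : (N \ nbhd G S).card + (N ∩ nbhd G S).card = N.card :=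
      Finset.card_sdiff_add_card_inter N (nbhd G S)
    omega
  -- d(A ∪ S) ≤ d(S)
  have hdAS : diffd G (A ∪ S) ≤ diffd G S := by
    have e4 : (A ∪ S).card + (A ∩ S).card = A.card + S.card :=
      Finset.card_union_add_card_inter A S
    have e5 : (nbhd G (A ∪ S)).card + (N ∩ nbhd G S).card = N.card + (nbhd G S).card := by
      rw [nbhd_union']
      exact Finset.card_union_add_card_inter _ _
    unfold diffd
    omega
  -- supermodularity finishes
  have hsup := supermod (G := G) A S
  have hle1 : diffd G (A ∪ S) ≤ critDiff G := diffd_le_critDiff _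
  have hle2 : diffd G (A ∩ S) ≤ critDiff G := diffd_le_critDiff _
  refine ⟨fun a ha b hb => hAind a (Finset.mem_inter.mp ha).1 b (Finset.mem_inter.mp hb).1, ?_⟩
  omega

/-- There is a critical independent set contained in every critical independent set. -/
lemma exists_min_critIndep (G : SimpleGraph V) :
    ∃ K : Finset V, IsCritIndep G K ∧ ∀ A : Finset V, IsCritIndep G A → K ⊆ A := by
  have hne : ((Finset.univ.powerset (α := V)).filter (fun A => IsCritIndep G A)).Nonempty := by
    obtain ⟨A, hA⟩ := exists_critIndep G
    exact ⟨A, Finset.mem_filter.mpr ⟨Finset.mem_powerset.mpr (Finset.subset_univ A), hA⟩⟩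
  obtain ⟨K, hK, hKmin⟩ := Finset.exists_min_image _ Finset.card hne
  rw [Finset.mem_filter] at hK
  refine ⟨K, hK.2, fun A hA => ?_⟩
  -- K ∩ A is critical independent
  have hKA : IsCritIndep G (K ∩ A) := by
    obtain ⟨hKind, hKcrit⟩ := hK.2
    obtain ⟨hAind, hAcrit⟩ := hA
    have hsup := supermod (G := G) K A
    have hle1 : diffd G (K ∪ A) ≤ critDiff G := diffd_le_critDiff _
    have hle2 : diffd G (K ∩ A) ≤ critDiff G := diffd_le_critDiff _
    refine ⟨fun a ha b hb => hKind a (Finset.mem_inter.mp ha).1 b (Finset.mem_inter.mp hb).1, ?_⟩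
    omega
  have hmin : K.card ≤ (K ∩ A).card :=
    hKmin _ (Finset.mem_filter.mpr ⟨Finset.mem_powerset.mpr (Finset.subset_univ _), hKA⟩)
  have hsub : K ∩ A ⊆ K := Finset.inter_subset_left
  have : K ∩ A = K := Finset.eq_of_subset_of_card_le hsub hmin
  rw [← this]
  exact Finset.inter_subset_right

end Aux

/-- if some independent set `S` has `|S| > |N(S)|`, then
`|core(G)| > d_c(G)`. -/
theorem stmt_13 {V : Type*} [Fintype V] (G : SimpleGraph V) (hiso : NoIsolated G)
    (h : ∃ S : Finset V, IsIndep G S ∧ (nbhd G S).card < S.card) :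
    critDiff G < ((coreG G).card : ℤ) := by
  obtain ⟨S₀, hS₀ind, hS₀⟩ := h
  -- d_c ≥ 1
  have hdc : 1 ≤ critDiff G := by
    have := diffd_le_critDiff (G := G) S₀
    unfold diffd at this
    omega
  -- minimal critical independent set K
  obtain ⟨K, hKcrit, hKmin⟩ := exists_min_critIndep G
  -- K is contained in core
  have hKcore : K ⊆ coreG G := by
    intro v hv
    rw [coreG, Finset.mem_filter]
    refine ⟨Finset.mem_univ v, fun S hS => ?_⟩
    have hKS : K ⊆ K ∩ S := by
      obtain ⟨A, hA⟩ := exists_critIndep G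
      exact Finset.subset_inter (Finset.Subset.refl K)
        (Finset.Subset.trans (hKmin _ (critIndep_inter_maxIndep hKcrit hS))
          Finset.inter_subset_right)
    exact (Finset.mem_inter.mp (hKS hv)).2
  -- K is nonempty
  have hKd : diffd G K = critDiff G := hKcrit.2
  have hKne : K.Nonempty := by
    rw [Finset.nonempty_iff_ne_empty]
    intro hKemp
    rw [hKemp] at hKd
    unfold diffd at hKd
    simp only [Finset.card_empty] at hKd
    have hNemp : nbhd G (∅ : Finset V) = ∅ := by
      ext v; simp [mem_nbhd']
    rw [hNemp] at hKd
    simp at hKd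
    omega
  -- N(K) is nonempty
  have hNKne : (nbhd G K).Nonempty := by
    obtain ⟨v, hv⟩ := hKne
    obtain ⟨w, hw⟩ := hiso v
    exact ⟨w, mem_nbhd'.mpr ⟨v, hv, hw.symm⟩⟩
  have hNK : 1 ≤ (nbhd G K).card := Finset.card_pos.mpr hNKne
  have hKcore' : K.card ≤ (coreG G).card := Finset.card_le_card hKcore
  unfold diffd at hKd
  omega
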